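/- Decentralized closed-loop correctness under decomposability (Theorem 1, abstract form): let A_C be a deterministic automaton over E = E₁ ∪ E₂ that is decomposable, i.e., A_C ≅ P₁(A_C) ‖ P₂(A_C), and let A_{P₁}, A_{P₂} be plant automata over E₁ and E₂ respectively. Then (A_{P₁} ‖ P₁(A_C)) ‖ (A_{P₂} ‖ P₂(A_C)) ≅ (A_{P₁} ‖ A_{P₂}) ‖ A_C. -/

import Mathlib

/-- A (deterministic, partial) automaton over the global event type `E`,
with its own event set `ev`. -/
structure Aut (E : Type*) where
  Q : Type*
  init : Q
  ev : Set E
  δ : Q → E → Option Q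

open Classical in
/-- Parallel composition: synchronize on shared events, interleave private events. -/
noncomputable def par {E : Type*} (A B : Aut E) : Aut E where
  Q := A.Q × B.Q
  init := (A.init, B.init)
  ev := A.ev ∪ B.ev
  δ := fun p e =>
    if e ∈ A.ev ∧ e ∈ B.ev then
      (A.δ p.1 e).bind (fun q1 => (B.δ p.2 e).map (fun q2 => (q1, q2)))
    else if e ∈ A.ev then (A.δ p.1 e).map (fun q1 => (q1, p.2))
    else if e ∈ B.ev then (B.δ p.2 e).map (fun q2 => (p.1, q2))
    else none

/-- Run of an automaton on a string from its initial state. -/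
def run {E : Type*} (A : Aut E) (s : List E) : Option A.Q :=
  s.foldl (fun oq e => oq.bind fun st => A.δ st e) (some A.init)

/-- Language of an automaton: strings executable from the initial state. -/
def lang {E : Type*} (A : Aut E) : Set (List E) := {s | (run A s).isSome}

/-- `A` is simulated by `B`. -/
def Sim {E : Type*} (A B : Aut E) : Prop :=
  ∃ R : A.Q → B.Q → Prop,
    R A.init B.init ∧
    (∀ q1 q2, R q1 q2 → ∀ e q1', A.δ q1 e = some q1' →
      ∃ q2', B.δ q2 e = some q2' ∧ R q1' q2')

/-- Bisimilarity of automata (one relation working in both directions). -/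
def Bisim {E : Type*} (A B : Aut E) : Prop :=
  ∃ R : A.Q → B.Q → Prop,
    R A.init B.init ∧
    (∀ q1 q2, R q1 q2 → ∀ e q1', A.δ q1 e = some q1' →
      ∃ q2', B.δ q2 e = some q2' ∧ R q1' q2') ∧
    (∀ q1 q2, R q1 q2 → ∀ e q2', B.δ q2 e = some q2' →
      ∃ q1', A.δ q1 e = some q1' ∧ R q1' q2')

/-- One ε-step: a transition on an event outside `Ei`. -/
def EpsStep {E : Type*} (A : Aut E) (Ei : Set E) (q q' : A.Q) : Prop :=
  ∃ e, e ∉ Ei ∧ A.δ q e = some q'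

/-- ε-reachability: reachability via events outside `Ei`. -/
def EpsReach {E : Type*} (A : Aut E) (Ei : Set E) : A.Q → A.Q → Prop :=
  Relation.ReflTransGen (EpsStep A Ei)

open Classical in
/-- Natural projection of an automaton onto event set `Ei`: transitions outside `Ei`
become ε-moves and ε-connected states are merged (subset construction). -/
noncomputable def projAut {E : Type*} (A : Aut E) (Ei : Set E) : Aut E where
  Q := Set A.Q
  init := {q | EpsReach A Ei A.init q}
  ev := Ei
  δ := fun S e =>
    if e ∈ Ei ∧ (∃ q ∈ S, ∃ q'', A.δ q e = some q'') then
      some {q' | ∃ q ∈ S, ∃ q'', A.δ q e = some q'' ∧ EpsReach A Ei q'' q'}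
    else none

open Classical in
/-- Step that keeps the state unchanged on events outside the alphabet. -/
noncomputable def fstep {E : Type*} (A : Aut E) (a : A.Q) (e : E) : Option A.Q :=
  if e ∈ A.ev then A.δ a e else some a

open Classical in
lemma par_δ {E : Type*} (A B : Aut E) (a : A.Q) (b : B.Q) (e : E) :
    (par A B).δ (a, b) e =
      if e ∈ A.ev ∪ B.ev then
        (fstep A a e).bind (fun a' => (fstep B b e).map (fun b' => (a', b')))
      else none := by
  by_cases hA : e ∈ A.ev <;> by_cases hB : e ∈ B.ev <;>
    simp [par, fstep, hA, hB, Set.mem_union] <;>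
    cases A.δ a e <;> cases B.δ b e <;> simp

open Classical in
lemma fstep_par {E : Type*} (A B : Aut E) (a : A.Q) (b : B.Q) (e : E) :
    fstep (par A B) (a, b) e =
      (fstep A a e).bind (fun a' => (fstep B b e).map (fun b' => (a', b'))) := by
  by_cases h : e ∈ (par A B).ev
  · rw [show fstep (par A B) (a, b) e = (par A B).δ (a, b) e from if_pos h, par_δ]
    exact if_pos h
  · have hA : e ∉ A.ev := fun hc => h (Set.mem_union_left _ hc)
    have hB : e ∉ B.ev := fun hc => h (Set.mem_union_right _ hc)
    simp [fstep, h, hA, hB]; rfl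

lemma bisim_symm {E : Type*} {A B : Aut E} (h : Bisim A B) : Bisim B A := by
  obtain ⟨R, hinit, hfwd, hbwd⟩ := h
  exact ⟨fun b a => R a b, hinit,
    fun b a hR e b' hb => hbwd a b hR e b' hb,
    fun b a hR e a' ha => hfwd a b hR e a' ha⟩

lemma bisim_trans {E : Type*} {A B C : Aut E} (h1 : Bisim A B) (h2 : Bisim B C) :
    Bisim A C := by
  obtain ⟨R, hinit, hfwd, hbwd⟩ := h1
  obtain ⟨S, hinit', hfwd', hbwd'⟩ := h2
  refine ⟨fun a c => ∃ b, R a b ∧ S b c, ⟨B.init, hinit, hinit'⟩, ?_, ?_⟩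
  · rintro a c ⟨b, hR, hS⟩ e a' ha
    obtain ⟨b', hb, hR'⟩ := hfwd a b hR e a' ha
    obtain ⟨c', hc, hS'⟩ := hfwd' b c hS e b' hb
    exact ⟨c', hc, b', hR', hS'⟩
  · rintro a c ⟨b, hR, hS⟩ e c' hc
    obtain ⟨b', hb, hS'⟩ := hbwd' b c hS e c' hc
    obtain ⟨a', ha, hR'⟩ := hbwd a b hR e b' hb
    exact ⟨a', ha, b', hR', hS'⟩

/-- Regrouping lemma: `(A‖B)‖(C‖D) ≅ (A‖C)‖(B‖D)`. -/
lemma bisim_regroup {E : Type*} (A B C D : Aut E) :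
    Bisim (par (par A B) (par C D)) (par (par A C) (par B D)) := by
  classical
  refine ⟨fun p q => p.1.1 = q.1.1 ∧ p.1.2 = q.2.1 ∧ p.2.1 = q.1.2 ∧ p.2.2 = q.2.2,
    ⟨rfl, rfl, rfl, rfl⟩, ?_, ?_⟩
  · rintro ⟨⟨a, b⟩, ⟨c, d⟩⟩ ⟨⟨a', c'⟩, ⟨b', d'⟩⟩ ⟨h1, h2, h3, h4⟩ e p' hp
    subst h1; subst h2; subst h3; subst h4
    erw [par_δ] at hp
    erw [par_δ]
    by_cases hmem : e ∈ (par A B).ev ∪ (par C D).ev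
    · have hmem' : e ∈ (par A C).ev ∪ (par B D).ev := by
        simp only [par, Set.mem_union] at hmem ⊢; tauto
      rw [if_pos hmem] at hp
      rw [if_pos hmem']
      rw [fstep_par, fstep_par] at hp
      rw [fstep_par, fstep_par]
      match hA : fstep A a e, hB : fstep B b e, hC : fstep C c e, hD : fstep D d e with
      | none, _, _, _ | some _, none, _, _ | some _, some _, none, _
      | some _, some _, some _, none => rw [hA, hB, hC, hD] at hp; cases hp
      | some va, some vb, some vc, some vd =>
        have h : some ((va, vb), (vc, vd)) = some p' := by
          rw [← hp]; simp [hA, hB, hC, hD]; rfl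
        obtain rfl := (Option.some.inj h)
        exact ⟨((va, vc), (vb, vd)), by simp [hA, hB, hC, hD]; rfl, rfl, rfl, rfl, rfl⟩
    · rw [if_neg hmem] at hp; exact absurd hp (by simp)
  · rintro ⟨⟨a, b⟩, ⟨c, d⟩⟩ ⟨⟨a', c'⟩, ⟨b', d'⟩⟩ ⟨h1, h2, h3, h4⟩ e q' hq
    subst h1; subst h2; subst h3; subst h4
    erw [par_δ] at hq
    erw [par_δ]
    by_cases hmem : e ∈ (par A C).ev ∪ (par B D).ev
    · have hmem' : e ∈ (par A B).ev ∪ (par C D).ev := by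
        simp only [par, Set.mem_union] at hmem ⊢; tauto
      rw [if_pos hmem] at hq
      rw [if_pos hmem']
      rw [fstep_par, fstep_par] at hq
      rw [fstep_par, fstep_par]
      match hA : fstep A a e, hB : fstep B b e, hC : fstep C c e, hD : fstep D d e with
      | none, _, _, _ | some _, _, none, _ | some _, none, some _, _
      | some _, some _, some _, none => rw [hA, hB, hC, hD] at hq; cases hq
      | some va, some vb, some vc, some vd =>
        have h : some ((va, vc), (vb, vd)) = some q' := by
          rw [← hq]; simp [hA, hB, hC, hD]; rfl
        obtain rfl := (Option.some.inj h)
        exact ⟨((va, vb), (vc, vd)), by simp [hA, hB, hC, hD]; rfl, rfl, rfl, rfl, rfl⟩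
    · rw [if_neg hmem] at hq; exact absurd hq (by simp)

/-- Congruence of `par` in the right argument, for bisimilar automata with the
same alphabet. -/
lemma bisim_par_congr_right {E : Type*} (A : Aut E) {B B' : Aut E}
    (hev : B.ev = B'.ev) (h : Bisim B B') : Bisim (par A B) (par A B') := by
  classical
  obtain ⟨R, hinit, hfwd, hbwd⟩ := h
  have hf : ∀ b b', R b b' → ∀ e b₂, fstep B b e = some b₂ →
      ∃ b₂', fstep B' b' e = some b₂' ∧ R b₂ b₂' := by
    intro b b' hR e b₂ hstep
    by_cases hmem : e ∈ B.ev
    · rw [fstep, if_pos hmem] at hstep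
      obtain ⟨b₂', hb, hR'⟩ := hfwd b b' hR e b₂ hstep
      exact ⟨b₂', by rw [fstep, if_pos (hev ▸ hmem)]; exact hb, hR'⟩
    · rw [fstep, if_neg hmem] at hstep
      refine ⟨b', by rw [fstep, if_neg (hev ▸ hmem)], ?_⟩
      cases hstep; exact hR
  have hf' : ∀ b b', R b b' → ∀ e b₂', fstep B' b' e = some b₂' →
      ∃ b₂, fstep B b e = some b₂ ∧ R b₂ b₂' := by
    intro b b' hR e b₂' hstep
    by_cases hmem : e ∈ B'.ev
    · rw [fstep, if_pos hmem] at hstep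
      obtain ⟨b₂, hb, hR'⟩ := hbwd b b' hR e b₂' hstep
      exact ⟨b₂, by rw [fstep, if_pos (hev ▸ hmem : e ∈ B.ev)]; exact hb, hR'⟩
    · rw [fstep, if_neg hmem] at hstep
      refine ⟨b, by rw [fstep, if_neg (show e ∉ B.ev from hev ▸ hmem)], ?_⟩
      cases hstep; exact hR
  refine ⟨fun p q => p.1 = q.1 ∧ R p.2 q.2, ⟨rfl, hinit⟩, ?_, ?_⟩
  · rintro ⟨a, b⟩ ⟨a', b'⟩ ⟨h1, hR⟩ e p' hp
    subst h1
    rw [par_δ] at hp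
    rw [par_δ]
    by_cases hmem : e ∈ A.ev ∪ B.ev
    · have hmem' : e ∈ A.ev ∪ B'.ev := hev ▸ hmem
      rw [if_pos hmem] at hp
      rw [if_pos hmem']
      match hA : fstep A a e, hB : fstep B b e with
      | none, _ | some _, none => simp [hA, hB] at hp
      | some va, some vb =>
        have h : some (va, vb) = some p' := by rw [← hp]; simp [hA, hB]
        obtain rfl := Option.some.inj h
        obtain ⟨b₂', hb', hR'⟩ := hf _ _ hR e _ hB
        exact ⟨(va, b₂'), by simp [hA, hb']; rfl, rfl, hR'⟩
    · rw [if_neg hmem] at hp; exact absurd hp (by simp)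
  · rintro ⟨a, b⟩ ⟨a', b'⟩ ⟨h1, hR⟩ e q' hq
    subst h1
    rw [par_δ] at hq
    rw [par_δ]
    by_cases hmem : e ∈ A.ev ∪ B'.ev
    · have hmem' : e ∈ A.ev ∪ B.ev := hev ▸ hmem
      rw [if_pos hmem] at hq
      rw [if_pos hmem']
      match hA : fstep A a e, hB' : fstep B' b' e with
      | none, _ | some _, none => simp [hA, hB'] at hq
      | some va, some vb' =>
        have h : some (va, vb') = some q' := by rw [← hq]; simp [hA, hB']
        obtain rfl := Option.some.inj h
        obtain ⟨b₂, hb, hR'⟩ := hf' _ _ hR e _ hB'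
        exact ⟨(va, b₂), by simp [hA, hb]; rfl, rfl, hR'⟩
    · rw [if_neg hmem] at hq; exact absurd hq (by simp)

/-- decentralized closed-loop correctness under decomposability:
if the global supervisor is decomposable into its natural projections, then the
composition of the locally supervised plants is bisimilar to the globally
supervised plant. -/
theorem decentralized_closed_loop {E : Type*} (AC AP₁ AP₂ : Aut E) (E₁ E₂ : Set E)
    (hC : AC.ev = E₁ ∪ E₂) (hP₁ : AP₁.ev = E₁) (hP₂ : AP₂.ev = E₂)
    (hdec : Bisim AC (par (projAut AC E₁) (projAut AC E₂))) :
    Bisim (par (par AP₁ (projAut AC E₁)) (par AP₂ (projAut AC E₂)))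
          (par (par AP₁ AP₂) AC) := by
  have h1 := bisim_regroup AP₁ (projAut AC E₁) AP₂ (projAut AC E₂)
  have hev : (par (projAut AC E₁) (projAut AC E₂)).ev = AC.ev := by
    simp [par, projAut, hC]
  have h2 := bisim_par_congr_right (par AP₁ AP₂) hev (bisim_symm hdec)
  exact bisim_trans h1 h2
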